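/- For the two-bidder smoothed first-price auction with λ > 0, opponent strategy β_2(v) = s·v with s ∈ (0,1], uniform prior on [0,1], and b_1 ≤ s, the absolute interim utility error |ū_1(v_1,b_1) − ū_1^{SM(λ)}(v_1,b_1)| is bounded above by ((ln 2 + 1)/s)·λ for all v_1, b_1 ∈ [0,1]. -/

import Mathlib

open Real MeasureTheory Set

/-!
Pointwise in the opponent's bid `b₂`, the first-price and the softmax ex-post utilities differ by
at most the softmax's misallocation probability `σ(-|b₂ - b₁| / λ)`: the payments agree off the
tie and `|v₁ - p| ≤ 1`. The substitution `x = (s v₂ - b₁) / λ` turns the integral of this weight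
into `(λ / s) ∫ σ(-|x|) dx` over an interval containing `0` (because `b₁ ≤ s`), and each half
contributes at most `∫_{-∞}^0 σ = log 2`, as `log (1 + eˣ)` is an antiderivative of `σ`. Hence the
error is at most `2 log 2 · λ / s ≤ (log 2 + 1) λ / s`.
-/

theorem hasDerivAt_log_one_add_exp (x : ℝ) :
    HasDerivAt (fun x => log (1 + exp x)) (sigmoid x) x := by
  refine (((hasDerivAt_exp x).const_add 1).log (by positivity)).congr_deriv ?_
  rw [sigmoid_def, exp_neg]
  field_simp
  ring

theorem integral_sigmoid (a b : ℝ) :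
    ∫ x in a..b, sigmoid x = log (1 + exp b) - log (1 + exp a) :=
  intervalIntegral.integral_eq_sub_of_hasDerivAt (fun x _ => hasDerivAt_log_one_add_exp x)
    (continuous_sigmoid.intervalIntegrable a b)

theorem integral_sigmoid_le_log_two {a : ℝ} : ∫ x in a..0, sigmoid x ≤ log 2 := by
  have hlog : 0 ≤ log (1 + exp a) := log_nonneg (by linarith [exp_pos a])
  rw [integral_sigmoid, exp_zero, one_add_one_eq_two]
  linarith

theorem integral_sigmoid_neg_abs_le {a b : ℝ} (ha : a ≤ 0) (hb : 0 ≤ b) :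
    ∫ x in a..b, sigmoid (-|x|) ≤ 2 * log 2 := by
  have hint : ∀ a b : ℝ, IntervalIntegrable (fun x => sigmoid (-|x|)) volume a b := fun a b =>
    (continuous_sigmoid.comp (by fun_prop)).intervalIntegrable a b
  have hleft : ∫ x in a..0, sigmoid (-|x|) = ∫ x in a..0, sigmoid x :=
    intervalIntegral.integral_congr fun x hx => by
      rw [uIcc_of_le ha] at hx
      rw [abs_of_nonpos hx.2, neg_neg]
  have hright : ∫ x in (0)..b, sigmoid (-|x|) = ∫ x in -b..0, sigmoid x := by
    rw [← neg_zero, ← intervalIntegral.integral_comp_neg, neg_zero]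
    exact intervalIntegral.integral_congr fun x hx => by
      rw [uIcc_of_le hb] at hx
      rw [abs_of_nonneg hx.1]
  rw [← intervalIntegral.integral_add_adjacent_intervals (hint a 0) (hint 0 b), hleft, hright]
  linarith [integral_sigmoid_le_log_two (a := a), integral_sigmoid_le_log_two (a := -b)]

theorem integral_comp_mul_sub_div (g : ℝ → ℝ) {s lam : ℝ} (hs : s ≠ 0) (hlam : lam ≠ 0)
    (a a' b : ℝ) :
    ∫ v in a..a', g ((s * v - b) / lam) =
      lam / s * ∫ x in (s * a - b) / lam..(s * a' - b) / lam, g x := by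
  have e : ∀ v, (s * v - b) / lam = s / lam * v - b / lam := fun v => by ring
  simp only [e, intervalIntegral.integral_comp_mul_sub g (div_ne_zero hs hlam), inv_div,
    smul_eq_mul]

theorem integral_sigmoid_neg_abs_affine_le {lam s b : ℝ} (hlam : 0 < lam) (hs : 0 < s)
    (hb₀ : 0 ≤ b) (hbs : b ≤ s) :
    ∫ v in Icc (0 : ℝ) 1, sigmoid (-|(s * v - b) / lam|) ≤ lam / s * (2 * log 2) := by
  rw [integral_Icc_eq_integral_Ioc, ← intervalIntegral.integral_of_le zero_le_one,
    integral_comp_mul_sub_div (fun x => sigmoid (-|x|)) hs.ne' hlam.ne']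
  gcongr
  exact integral_sigmoid_neg_abs_le (div_nonpos_of_nonpos_of_nonneg (by linarith) hlam.le)
    (div_nonneg (by linarith) hlam.le)

theorem integrableOn_Icc_of_abs_le {f : ℝ → ℝ} (hf : Measurable f) {a b C : ℝ}
    (h : ∀ x ∈ Icc a b, |f x| ≤ C) : IntegrableOn f (Icc a b) :=
  Measure.integrableOn_of_bounded measure_Icc_lt_top.ne hf.aestronglyMeasurable
    (ae_restrict_of_forall_mem measurableSet_Icc h)

noncomputable def fpaUtility (v₁ b₁ b₂ : ℝ) : ℝ := if b₂ < b₁ then v₁ - b₁ else 0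

noncomputable def softmaxUtility (lam v₁ b₁ b₂ : ℝ) : ℝ :=
  (v₁ - ((if b₂ < b₁ then b₁ else 0) + (if b₁ < b₂ then b₂ else 0))) *
    (1 + exp ((b₂ - b₁) / lam))⁻¹

theorem measurable_fpaUtility (v₁ b₁ : ℝ) : Measurable (fpaUtility v₁ b₁) :=
  Measurable.ite measurableSet_Iio measurable_const measurable_const

theorem measurable_softmaxUtility (lam v₁ b₁ : ℝ) : Measurable (softmaxUtility lam v₁ b₁) :=
  (measurable_const.sub ((Measurable.ite measurableSet_Iio measurable_const measurable_const).add
    (Measurable.ite measurableSet_Ioi measurable_id measurable_const))).mul (by fun_prop)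

section Utilities

variable {lam v₁ b₁ b₂ : ℝ}

theorem abs_fpaUtility_le (hv₁ : v₁ ∈ Icc (0 : ℝ) 1) (hb₁ : b₁ ∈ Icc (0 : ℝ) 1) :
    |fpaUtility v₁ b₁ b₂| ≤ 1 := by
  unfold fpaUtility
  split_ifs
  · exact abs_sub_le_of_nonneg_of_le hv₁.1 hv₁.2 hb₁.1 hb₁.2
  · simp

theorem abs_softmaxUtility_le (hv₁ : v₁ ∈ Icc (0 : ℝ) 1) (hb₁ : b₁ ∈ Icc (0 : ℝ) 1)
    (hb₂ : b₂ ∈ Icc (0 : ℝ) 1) : |softmaxUtility lam v₁ b₁ b₂| ≤ 1 := by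
  have hw : |(1 + exp ((b₂ - b₁) / lam))⁻¹| ≤ 1 := by
    rw [abs_inv, abs_of_pos (by positivity)]
    exact inv_le_one_of_one_le₀ (by linarith [exp_pos ((b₂ - b₁) / lam)])
  have hp : |v₁ - ((if b₂ < b₁ then b₁ else 0) + (if b₁ < b₂ then b₂ else 0))| ≤ 1 := by
    obtain ⟨_, _⟩ := hv₁
    obtain ⟨_, _⟩ := hb₁
    obtain ⟨_, _⟩ := hb₂
    rw [abs_le]
    split_ifs <;> constructor <;> linarith
  rw [softmaxUtility, abs_mul]
  exact mul_le_one₀ hp (abs_nonneg _) hw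

theorem abs_fpaUtility_sub_softmaxUtility_le (hlam : 0 ≤ lam) (hv₁ : v₁ ∈ Icc (0 : ℝ) 1)
    (hb₁ : b₁ ∈ Icc (0 : ℝ) 1) (hb₂ : b₂ ∈ Icc (0 : ℝ) 1) :
    |fpaUtility v₁ b₁ b₂ - softmaxUtility lam v₁ b₁ b₂| ≤ sigmoid (-|(b₂ - b₁) / lam|) := by
  obtain ⟨hv0, hv1⟩ := hv₁
  have hw : ∀ t, (1 + exp t)⁻¹ = sigmoid (-t) := fun t => by rw [sigmoid_def, neg_neg]
  set t := (b₂ - b₁) / lam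
  have hσ := sigmoid_pos (-|t|)
  rcases lt_trichotomy b₂ b₁ with hlt | heq | hgt
  · have ht : -|t| = t := by
      rw [abs_of_nonpos (div_nonpos_of_nonpos_of_nonneg (by linarith) hlam), neg_neg]
    have e : fpaUtility v₁ b₁ b₂ - softmaxUtility lam v₁ b₁ b₂ = (v₁ - b₁) * sigmoid (-|t|) := by
      simp only [fpaUtility, softmaxUtility, if_pos hlt, if_neg hlt.not_gt, hw, ht]
      rw [sigmoid_neg]
      ring
    rw [e, abs_mul, abs_of_pos hσ]
    exact mul_le_of_le_one_left hσ.le (abs_sub_le_of_nonneg_of_le hv0 hv1 hb₁.1 hb₁.2)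
  · subst heq
    have ht : |t| = 0 := by simp only [t, sub_self, zero_div, abs_zero]
    have e : fpaUtility v₁ b₂ b₂ - softmaxUtility lam v₁ b₂ b₂ = -(v₁ * sigmoid (-|t|)) := by
      simp only [fpaUtility, softmaxUtility, lt_irrefl, if_false, hw, ht, sub_self, zero_div]
      ring
    rw [e, abs_neg, abs_mul, abs_of_nonneg hv0, abs_of_pos hσ]
    exact mul_le_of_le_one_left hσ.le hv1
  · have ht : -|t| = -t := by rw [abs_of_nonneg (div_nonneg (by linarith) hlam)]
    have e : fpaUtility v₁ b₁ b₂ - softmaxUtility lam v₁ b₁ b₂ =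
        -((v₁ - b₂) * sigmoid (-|t|)) := by
      simp only [fpaUtility, softmaxUtility, if_neg hgt.not_gt, if_pos hgt, hw, ht, t]
      ring
    rw [e, abs_neg, abs_mul, abs_of_pos hσ]
    exact mul_le_of_le_one_left hσ.le (abs_sub_le_of_nonneg_of_le hv0 hv1 hb₂.1 hb₂.2)

end Utilities

theorem interim_utility_error_linear_bound (lam s v1 b1 : ℝ)
    (hlam : 0 < lam) (hs : s ∈ Set.Ioc (0 : ℝ) 1)
    (hv1 : v1 ∈ Set.Icc (0 : ℝ) 1) (hb1 : b1 ∈ Set.Icc (0 : ℝ) 1) (hbs : b1 ≤ s) :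
    |(∫ v2 in Set.Icc (0 : ℝ) 1, (if s * v2 < b1 then v1 - b1 else 0)) -
      ∫ v2 in Set.Icc (0 : ℝ) 1,
        (v1 - ((if s * v2 < b1 then b1 else 0) + (if b1 < s * v2 then s * v2 else 0))) *
          (1 + Real.exp ((s * v2 - b1) / lam))⁻¹|
      ≤ (Real.log 2 + 1) / s * lam := by
  obtain ⟨hs0, hs1⟩ := hs
  change |(∫ v in Icc (0 : ℝ) 1, fpaUtility v1 b1 (s * v)) -
    ∫ v in Icc (0 : ℝ) 1, softmaxUtility lam v1 b1 (s * v)| ≤ _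
  have hbid : ∀ v ∈ Icc (0 : ℝ) 1, s * v ∈ Icc (0 : ℝ) 1 := fun v hv =>
    ⟨mul_nonneg hs0.le hv.1, mul_le_one₀ hs1 hv.1 hv.2⟩
  have hfpa : IntegrableOn (fun v => fpaUtility v1 b1 (s * v)) (Icc 0 1) :=
    integrableOn_Icc_of_abs_le ((measurable_fpaUtility v1 b1).comp (measurable_const_mul s))
      fun _ _ => abs_fpaUtility_le hv1 hb1
  have hsm : IntegrableOn (fun v => softmaxUtility lam v1 b1 (s * v)) (Icc 0 1) :=
    integrableOn_Icc_of_abs_le ((measurable_softmaxUtility lam v1 b1).comp (measurable_const_mul s))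
      fun v hv => abs_softmaxUtility_le hv1 hb1 (hbid v hv)
  calc _ = |∫ v in Icc (0 : ℝ) 1,
          (fpaUtility v1 b1 (s * v) - softmaxUtility lam v1 b1 (s * v))| := by
        rw [integral_sub hfpa hsm]
    _ ≤ ∫ v in Icc (0 : ℝ) 1, |fpaUtility v1 b1 (s * v) - softmaxUtility lam v1 b1 (s * v)| :=
        abs_integral_le_integral_abs
    _ ≤ ∫ v in Icc (0 : ℝ) 1, sigmoid (-|(s * v - b1) / lam|) :=
        setIntegral_mono_on (hfpa.sub hsm).abs
          ((continuous_sigmoid.comp (by fun_prop)).integrableOn_Icc) measurableSet_Icc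
          fun v hv => abs_fpaUtility_sub_softmaxUtility_le hlam.le hv1 hb1 (hbid v hv)
    _ ≤ lam / s * (2 * log 2) := integral_sigmoid_neg_abs_affine_le hlam hs0 hb1.1 hbs
    _ ≤ lam / s * (log 2 + 1) := by
        gcongr
        linarith [log_le_sub_one_of_pos two_pos]
    _ = (log 2 + 1) / s * lam := by ring
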